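/- Let s and t be level-2 stacks with |t| < |s| and TOP₂(s) a word-prefix of TOP₂(t). Let ρ be a run of length l starting at stack s such that (1) |ρ(i)| ≥ |s| for all 0 ≤ i < l and (2) |t| ≤ |ρ(l)| < |s|. Then ρ is a return. -/

import Mathlib

namespace CPG

/-! ## Level-2 collapsible pushdown stacks -/

/-- Stack letters: `Sum.inl σ` is a letter with a level-1 link,
`Sum.inr (σ, k)` is a letter with a level-2 link to the substack of width `k`. -/
abbrev Letter (A : Type) := A ⊕ (A × ℕ)

def symOf {A : Type} : Letter A → A
  | Sum.inl a => a
  | Sum.inr (a, _) => a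

def lvlOf {A : Type} : Letter A → ℕ
  | Sum.inl _ => 1
  | Sum.inr _ => 2

abbrev Word (A : Type) := List (Letter A)

/-- A 2-word: a list of words; the last word is the topmost one. -/
abbrev Stack2 (A : Type) := List (Word A)

/-- The initial level-2 stack `⊥₂`. -/
def bottom2 {A : Type} (bot : A) : Stack2 A := [[Sum.inl bot]]

def top2 {A : Type} (s : Stack2 A) : Option (Word A) := s.getLast?

def top1 {A : Type} (s : Stack2 A) : Option (Letter A) := s.getLast?.bind List.getLast?

def symS {A : Type} (s : Stack2 A) : Option A := (top1 s).map symOf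

def lvlS {A : Type} (s : Stack2 A) : Option ℕ := (top1 s).map lvlOf

def lnkS {A : Type} (s : Stack2 A) : Option ℕ :=
  match top1 s, top2 s with
  | some (Sum.inr (_, j)), _ => some j
  | some (Sum.inl _), some w => some (w.length - 1)
  | _, _ => none

def clone2 {A : Type} (s : Stack2 A) : Option (Stack2 A) :=
  (top2 s).map fun w => s ++ [w]

def push1 {A : Type} [DecidableEq A] (bot a : A) (s : Stack2 A) : Option (Stack2 A) :=
  if a = bot then none else (top2 s).map fun w => s.dropLast ++ [w ++ [Sum.inl a]]

def push2 {A : Type} [DecidableEq A] (bot a : A) (s : Stack2 A) : Option (Stack2 A) :=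
  if a = bot then none else
    (top2 s).map fun w => s.dropLast ++ [w ++ [Sum.inr (a, s.length - 1)]]

def pop2 {A : Type} (s : Stack2 A) : Option (Stack2 A) :=
  if 1 < s.length then some s.dropLast else none

def pop1 {A : Type} (s : Stack2 A) : Option (Stack2 A) :=
  match s.getLast? with
  | some w => if 1 < w.length then some (s.dropLast ++ [w.dropLast]) else none
  | none => none

def collapse {A : Type} (s : Stack2 A) : Option (Stack2 A) :=
  match top1 s with
  | some (Sum.inr (_, k)) => if 0 < k then some (s.take k) else none
  | some (Sum.inl _) => pop1 s
  | none => none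

/-- The level-2 stack operations. -/
inductive Op (A : Type) where
  | clone2 | pop1 | pop2 | collapse
  | push1 (a : A) | push2 (a : A)

def applyOp {A : Type} [DecidableEq A] (bot : A) : Op A → Stack2 A → Option (Stack2 A)
  | .clone2 => clone2
  | .pop1 => pop1
  | .pop2 => pop2
  | .collapse => collapse
  | .push1 a => push1 bot a
  | .push2 a => push2 bot a

/-- `Stacks(Σ)` : the smallest set containing `⊥₂` and closed under the operations. -/
inductive IsStack {A : Type} [DecidableEq A] (bot : A) : Stack2 A → Prop where
  | base : IsStack bot (bottom2 bot)
  | step {s t : Stack2 A} (op : Op A) : IsStack bot s → applyOp bot op s = some t →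
      IsStack bot t

/-- Iterated application of a partial stack operation. -/
def iter {A : Type} (f : Stack2 A → Option (Stack2 A)) : ℕ → Stack2 A → Option (Stack2 A)
  | 0, s => some s
  | n + 1, s => (f s).bind (iter f n)

/-- `t` is a substack of `s`: `t = Pop₁ⁿ(Pop₂ᵐ(s))`. -/
def Substack {A : Type} (t s : Stack2 A) : Prop :=
  ∃ n m, (iter pop2 m s).bind (iter pop1 n) = some t

def ProperSubstack {A : Type} (t s : Stack2 A) : Prop := Substack t s ∧ t ≠ s

/-- `s` is a prefix of `t` (`s ⊑ t`). -/
def StackPrefix {A : Type} (s t : Stack2 A) : Prop :=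
  s ≠ [] ∧ s.length ≤ t.length ∧ s.dropLast <+: t ∧
    ∀ j, s.length - 1 ≤ j → j < t.length → s.getLastD [] <+: t.getD j []

/-- `t[s/u]` : the stack obtained from `t` by replacing the prefix `s` by `u`. -/
def substPrefix {A : Type} (t s u : Stack2 A) : Stack2 A :=
  u.dropLast ++
    (t.drop (s.length - 1)).map fun v => u.getLastD [] ++ v.drop (s.getLastD []).length

/-! ## Collapsible pushdown systems and runs -/

/-- A level-2 collapsible pushdown system. -/
structure CPS (Q A Γ : Type) where
  bot : A
  q0 : Q
  Δ : Set (Q × A × Γ × Q × Op A)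

variable {Q A Γ : Type} [DecidableEq A]

/-- A `γ`-labelled transition realized by the operation `op`. -/
def TransOp (S : CPS Q A Γ) (γ : Γ) (op : Op A) (c c' : Q × Stack2 A) : Prop :=
  ∃ σ : A, symS c.2 = some σ ∧ (c.1, σ, γ, c'.1, op) ∈ S.Δ ∧
    applyOp S.bot op c.2 = some c'.2

def Trans (S : CPS Q A Γ) (γ : Γ) (c c' : Q × Stack2 A) : Prop :=
  ∃ op, TransOp S γ op c c'

/-- A run of a collapsible pushdown system (recording configurations, labels and
operations of each step). -/
structure Run (S : CPS Q A Γ) where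
  len : ℕ
  cfg : ℕ → Q × Stack2 A
  lab : ℕ → Γ
  op : ℕ → Op A
  ok : ∀ i, i < len → TransOp S (lab i) (op i) (cfg i) (cfg (i + 1))

def Run.stk {S : CPS Q A Γ} (ρ : Run S) (i : ℕ) : Stack2 A := (ρ.cfg i).2

/-- The word of labels along a run. -/
def Run.labels {S : CPS Q A Γ} (ρ : Run S) : List Γ :=
  List.ofFn fun i : Fin ρ.len => ρ.lab i

/-- `Reach_L`-reachability: a run from `c` to `c'` labelled by a word in `L`. -/
def ReachL (S : CPS Q A Γ) (L : Language Γ) (c c' : Q × Stack2 A) : Prop :=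
  ∃ ρ : Run S, ρ.cfg 0 = c ∧ ρ.cfg ρ.len = c' ∧ ρ.labels ∈ L

/-- Plain reachability. -/
def Reach (S : CPS Q A Γ) (c c' : Q × Stack2 A) : Prop :=
  ∃ ρ : Run S, ρ.cfg 0 = c ∧ ρ.cfg ρ.len = c'

/-! ## ε-contraction -/

def oneLetterLang (γ : Γ) : Language Γ := {[γ]}

def nonEpsLang (eps : Γ) : Language Γ := {w | ∃ γ : Γ, γ ≠ eps ∧ w = [γ]}

/-- The language `{ε}*`. -/
def epsStar (eps : Γ) : Language Γ := KStar.kstar (oneLetterLang eps)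

/-- The language `({ε}*(Γ∖{ε}))*`. -/
def domLang (eps : Γ) : Language Γ :=
  KStar.kstar (epsStar eps * nonEpsLang eps)

/-- The language `{ε}*γ`. -/
def edgeLang (eps γ : Γ) : Language Γ := epsStar eps * oneLetterLang γ

/-- The vertex set of the ε-contraction `G/ε`. -/
def EpsDomain (S : CPS Q A Γ) (eps : Γ) : Set (Q × Stack2 A) :=
  {c | ReachL S (domLang eps) (S.q0, bottom2 S.bot) c}

/-! ## (Generalised) milestones and the order ≪ -/

/-- `wordAt bot s i` is the word `wᵢ` of `s`, with the convention `w₀ = ⊥`. -/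
def wordAt {A : Type} (bot : A) (s : Stack2 A) (i : ℕ) : Word A :=
  if i = 0 then [Sum.inl bot] else s.getD (i - 1) []

/-- Longest common prefix of two words. -/
def lcp {α : Type} [DecidableEq α] : List α → List α → List α
  | a :: s, b :: t => if a = b then a :: lcp s t else []
  | _, _ => []

/-- `m` is a generalised milestone of `s`. -/
def GenMilestone (bot : A) (s m : Stack2 A) : Prop :=
  ∃ i v, i < s.length ∧ m = s.take i ++ [v] ∧
    lcp (wordAt bot s i) (wordAt bot s (i + 1)) <+: v ∧
    (v <+: wordAt bot s i ∨ v <+: wordAt bot s (i + 1))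

/-- `m` is a milestone of `s`. -/
def Milestone (bot : A) (s m : Stack2 A) : Prop :=
  ∃ i v, i < s.length ∧ m = s.take i ++ [v] ∧
    lcp (wordAt bot s i) (wordAt bot s (i + 1)) <+: v ∧
    v <+: wordAt bot s (i + 1)

def genMilestones (bot : A) (s : Stack2 A) : Set (Stack2 A) := {m | GenMilestone bot s m}

def milestones (bot : A) (s : Stack2 A) : Set (Stack2 A) := {m | Milestone bot s m}

/-- The base cases of the partial order `≪`. -/
def llBase (bot : A) (s t : Stack2 A) : Prop :=
  s.length < t.length ∨
    (s ≠ [] ∧ s.length = t.length ∧ s.dropLast = t.dropLast ∧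
      ((t.getLastD [] <+: s.getLastD [] ∧ t.getLastD [] ≠ s.getLastD [] ∧
          s.getLastD [] <+: wordAt bot s (s.length - 1)) ∨
        (s.getLastD [] <+: t.getLastD [] ∧ s.getLastD [] ≠ t.getLastD [] ∧
          ¬ t.getLastD [] <+: wordAt bot s (s.length - 1))))

/-- The order `≪`: the smallest reflexive transitive relation containing `llBase`. -/
def ll (bot : A) : Stack2 A → Stack2 A → Prop := Relation.ReflTransGen (llBase bot)

/-- `m'` is the ≪-successor of `m` within `genMilestones bot s`. -/
def LlSuccessor (bot : A) (s m m' : Stack2 A) : Prop :=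
  GenMilestone bot s m ∧ GenMilestone bot s m' ∧ m ≠ m' ∧ ll bot m m' ∧
    ∀ m'', GenMilestone bot s m'' → ll bot m m'' → m'' ≠ m → ll bot m' m''

/-! ## Loops, returns and 1-loops -/

/-- The segment `[i,j]` of `ρ` is a loop (of its initial stack). -/
def LoopSeg {S : CPS Q A Γ} (ρ : Run S) (i j : ℕ) : Prop :=
  i ≤ j ∧ j ≤ ρ.len ∧ ρ.stk j = ρ.stk i ∧
    (∀ k, i ≤ k → k ≤ j → ∀ t, pop2 (ρ.stk i) = some t → ¬ Substack (ρ.stk k) t) ∧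
    (∀ k, i ≤ k → k ≤ j → ∀ m, 0 < m → ∀ t, iter pop1 m (ρ.stk i) = some t →
      ρ.stk k = t → ∀ m', m' < m → ∃ t', iter pop1 m' (ρ.stk i) = some t' ∧
        lvlS t' = some 1)

/-- A high loop: a loop that never visits `Pop₁` of its stack. -/
def HighLoopSeg {S : CPS Q A Γ} (ρ : Run S) (i j : ℕ) : Prop :=
  LoopSeg ρ i j ∧ ∀ k, i ≤ k → k ≤ j → ∀ t, pop1 (ρ.stk i) = some t → ρ.stk k ≠ t

/-- A low loop: a loop whose second and second-to-last stacks are `Pop₁` of its stack. -/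
def LowLoopSeg {S : CPS Q A Γ} (ρ : Run S) (i j : ℕ) : Prop :=
  LoopSeg ρ i j ∧ i < j ∧
    ∃ t, pop1 (ρ.stk i) = some t ∧ ρ.stk (i + 1) = t ∧ ρ.stk (j - 1) = t

/-- The common part of the definition of a return on the segment `[i,j]`:
it leads from its initial stack `t` to `Pop₂(t)` and never visits a substack
of `Pop₂(t)` before its final configuration. -/
def RetShell {S : CPS Q A Γ} (ρ : Run S) (i j : ℕ) : Prop :=
  i < j ∧ j ≤ ρ.len ∧ pop2 (ρ.stk i) = some (ρ.stk j) ∧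
    ∀ k, i ≤ k → k < j → ¬ Substack (ρ.stk k) (ρ.stk j)

/-- The segment `[i,j]` of `ρ` is a return (from its initial stack `t` to `Pop₂(t)`). -/
inductive RetSeg {S : CPS Q A Γ} (ρ : Run S) : ℕ → ℕ → Prop where
  | pop2 {i j : ℕ} (h : RetShell ρ i j) (hop : ρ.op (j - 1) = Op.pop2) : RetSeg ρ i j
  | collapse {i j : ℕ} (h : RetShell ρ i j) (hop : ρ.op (j - 1) = Op.collapse)
      (hpre : ∃ w w', top2 (ρ.stk i) = some w ∧ top2 (ρ.stk (j - 1)) = some w' ∧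
        w <+: w' ∧ w ≠ w') : RetSeg ρ i j
  | sub {i k j : ℕ} (h : RetShell ρ i j) (hik : i < k) (hkj : k ≤ j)
      (hpop : pop1 (ρ.stk i) = some (ρ.stk k)) (hret : RetSeg ρ k j) : RetSeg ρ i j

/-- The segment `[i,j]` of `ρ` is a level-1-loop. -/
def OneLoopSeg {S : CPS Q A Γ} (ρ : Run S) (i j : ℕ) : Prop :=
  i ≤ j ∧ j ≤ ρ.len ∧
    ∃ (s : Stack2 A) (w : Word A) (s' : Stack2 A),
      ρ.stk i = s ++ [w] ∧ ρ.stk j = s ++ s' ++ [w] ∧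
      (∀ k, i ≤ k → k ≤ j → s.length < (ρ.stk k).length) ∧
      (∀ k, i ≤ k → k ≤ j → 1 < w.length → top2 (ρ.stk k) = some w.dropLast →
        ∃ m, k < m ∧ m ≤ j ∧ RetSeg ρ k m)

/-! ## ExRet, ExLoop, ... -/

/-- `w↓₀` : replace every level-2 link by `0`. -/
def down0 {A : Type} : Word A → Word A :=
  List.map fun a => match a with
    | Sum.inl x => Sum.inl x
    | Sum.inr (x, _) => Sum.inr (x, 0)

def ExRet (S : CPS Q A Γ) (w : Word A) : Set (Q × Q) :=
  {p | ∃ ρ : Run S, ρ.cfg 0 = (p.1, [down0 w, down0 w]) ∧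
    ρ.cfg ρ.len = (p.2, [down0 w]) ∧ RetSeg ρ 0 ρ.len}

def ExLoop (S : CPS Q A Γ) (w : Word A) : Set (Q × Q) :=
  {p | ∃ ρ : Run S, ρ.cfg 0 = (p.1, [down0 w]) ∧ ρ.cfg ρ.len = (p.2, [down0 w]) ∧
    LoopSeg ρ 0 ρ.len}

def ExHLoop (S : CPS Q A Γ) (w : Word A) : Set (Q × Q) :=
  {p | ∃ ρ : Run S, ρ.cfg 0 = (p.1, [down0 w]) ∧ ρ.cfg ρ.len = (p.2, [down0 w]) ∧
    HighLoopSeg ρ 0 ρ.len}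

def ExLLoop (S : CPS Q A Γ) (w : Word A) : Set (Q × Q) :=
  {p | ∃ ρ : Run S, ρ.cfg 0 = (p.1, [down0 w]) ∧ ρ.cfg ρ.len = (p.2, [down0 w]) ∧
    LowLoopSeg ρ 0 ρ.len}

def ExOneLoop (S : CPS Q A Γ) (w : Word A) : Set (Q × Q) :=
  {p | ∃ (ρ : Run S) (s' : Stack2 A), ρ.cfg 0 = (p.1, [down0 w]) ∧
    ρ.cfg ρ.len = (p.2, s' ++ [down0 w]) ∧ OneLoopSeg ρ 0 ρ.len}

/-! ## Finite binary trees -/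

/-- Finite binary trees with labels in `α` and optional left/right children. -/
inductive PTree (α : Type) where
  | node (a : α) (l r : Option (PTree α)) : PTree α

/-- The label of the node at address `d` (`false` = left/0, `true` = right/1). -/
def PTree.labelAt {α : Type} : PTree α → List Bool → Option α
  | .node a _ _, [] => some a
  | .node _ (some t) _, false :: d => t.labelAt d
  | .node _ none _, false :: _ => none
  | .node _ _ (some t), true :: d => t.labelAt d
  | .node _ _ none, true :: _ => none

def PTree.map {α β : Type} (f : α → β) : PTree α → PTree β
  | .node a l r =>
    .node (f a)
      (match l with | none => none | some t => some (t.map f))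
      (match r with | none => none | some t => some (t.map f))

/-- Convolution of two trees, with `none` as padding symbol `□`. -/
def PTree.conv {α β : Type} : PTree α → PTree β → PTree (Option α × Option β)
  | .node a l r, .node b l' r' =>
    .node (some a, some b)
      (match l, l' with
        | none, none => none
        | some t, none => some (t.map fun x => (some x, none))
        | none, some u => some (u.map fun x => (none, some x))
        | some t, some u => some (PTree.conv t u))
      (match r, r' with
        | none, none => none
        | some t, none => some (t.map fun x => (some x, none))
        | none, some u => some (u.map fun x => (none, some x))
        | some t, some u => some (PTree.conv t u))

/-- A (bottom-up nondeterministic) finite tree automaton. -/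
structure TreeAut (α : Type) where
  St : Type
  fin : Finite St
  qI : St
  F : Set St
  Δ : Set (St × α × St × St)

/-- Acceptance of a finite tree by a tree automaton. -/
def TreeAut.Accepts {α : Type} (M : TreeAut α) (t : PTree α) : Prop :=
  ∃ ρ : List Bool → M.St,
    (∀ d, t.labelAt d = none → ρ d = M.qI) ∧
    (∀ d a, t.labelAt d = some a → (ρ d, a, ρ (d ++ [false]), ρ (d ++ [true])) ∈ M.Δ) ∧
    ρ [] ∈ M.F

/-- A family of binary relations on `B` is tree-automatic. -/
def IsTreeAutomatic {B : Type} {I : Type} (E : I → B → B → Prop) : Prop :=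
  ∃ (α : Type) (_ : Finite α) (AB : TreeAut α) (AE : I → TreeAut (Option α × Option α))
    (f : {t : PTree α // AB.Accepts t} → B),
    Function.Bijective f ∧
      ∀ (i : I) (t₁ t₂ : {t : PTree α // AB.Accepts t}),
        (AE i).Accepts (PTree.conv t₁.1 t₂.1) ↔ E i (f t₁) (f t₂)

/-! ## The encoding of configurations as trees -/

/-- Labels of encoding trees: a state, a pair (symbol, link level), or `ε`. -/
abbrev EncLabel (Q A : Type) := Q ⊕ ((A × ℕ) ⊕ Unit)

def epsLab {Q A : Type} : EncLabel Q A := Sum.inr (Sum.inr ())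

def symLab {Q A : Type} (τ : Letter A) : EncLabel Q A := Sum.inr (Sum.inl (symOf τ, lvlOf τ))

/-- Encoding of blocklines as trees (with a fuel parameter driving the recursion;
the fuel used in `encStack` is large enough so that it never runs out on actual
blocklines). The left subtree encodes the blockline induced by the first maximal
block, the right subtree the remaining blocks. -/
def encBL (Q : Type) {A : Type} [DecidableEq A] :
    ℕ → EncLabel Q A → List (Word A) → PTree (EncLabel Q A)
  | 0, σ, _ => .node σ none none
  | _ + 1, σ, [] => .node σ none none
  | fuel + 1, σ, w :: rest =>
    if w.length ≤ 1 then
      match rest with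
      | [] => .node σ none none
      | _ :: _ => .node σ none (some (encBL Q fuel epsLab rest))
    else
      let p : Word A → Bool := fun v => decide (v.take 2 = w.take 2)
      let blk := (w :: rest).takeWhile p
      let restBlk := (w :: rest).dropWhile p
      .node σ
        (some (encBL Q fuel
          (match w[1]? with | some τ' => symLab τ' | none => epsLab)
          (blk.map List.tail)))
        (match restBlk with
          | [] => none
          | _ :: _ => some (encBL Q fuel epsLab restBlk))

/-- The total number of letters of a 2-word. -/
def size2 {A : Type} (s : Stack2 A) : ℕ := (s.map List.length).sum

/-- The encoding `Enc(s) = Enc(s, (⊥,1))` of a stack. -/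
def encStack (Q : Type) {A : Type} [DecidableEq A] (bot : A) (s : Stack2 A) :
    PTree (EncLabel Q A) :=
  encBL Q (size2 s + 1) (Sum.inr (Sum.inl (bot, 1))) s

/-- The encoding of a configuration: the state at the root, `Enc(s)` as left subtree. -/
def Enc {Q A : Type} [DecidableEq A] (bot : A) (c : Q × Stack2 A) : PTree (EncLabel Q A) :=
  .node (Sum.inl c.1) (some (encStack Q bot c.2)) none

/-- The class `EncTrees` of encoding trees. -/
def EncTrees (Q A : Type) (bot : A) : Set (PTree (EncLabel Q A)) :=
  {T | (∃ q : Q, T.labelAt [] = some (Sum.inl q)) ∧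
    T.labelAt [true] = none ∧ T.labelAt [false] ≠ none ∧
    T.labelAt [false] = some (Sum.inr (Sum.inl (bot, 1))) ∧
    (∀ (d : List Bool) (x : EncLabel Q A),
      T.labelAt (false :: (d ++ [false])) = some x →
        ∃ (σ : A) (l : ℕ), σ ≠ bot ∧ (l = 1 ∨ l = 2) ∧ x = Sum.inr (Sum.inl (σ, l))) ∧
    (∀ (d : List Bool) (x : EncLabel Q A), T.labelAt (d ++ [true]) = some x → x = epsLab) ∧
    (∀ (d : List Bool) (σ : A), ¬ (T.labelAt (d ++ [false]) = some (Sum.inr (Sum.inl (σ, 1))) ∧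
      T.labelAt (d ++ [true, false]) = some (Sum.inr (Sum.inl (σ, 1)))))}

/-- Restriction of a tree to the nodes lexicographically ≤ `d`. -/
def restrictLex {α : Type} : PTree α → List Bool → PTree α
  | .node a _ _, [] => .node a none none
  | .node a l _, false :: d =>
      .node a (match l with | none => none | some t => some (restrictLex t d)) none
  | .node a l r, true :: d =>
      .node a l (match r with | none => none | some t => some (restrictLex t d))

/-- The lexicographic order on tree addresses. -/
def lexLe (d e : List Bool) : Prop :=
  d <+: e ∨ ∃ (c x y : List Bool), d = c ++ false :: x ∧ e = c ++ true :: y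

/-! ## Deterministic finite automata with output (Moore machines) -/

structure Moore (α ω : Type) where
  St : Type
  fin : Finite St
  init : St
  step : St → α → St
  out : St → ω

def Moore.output {α ω : Type} (M : Moore α ω) (w : List α) : ω :=
  M.out (w.foldl M.step M.init)

section ListAux
variable {α : Type}

lemma getElem?_of_dropLast {l : List α} {i : ℕ} {x : α} (h : l.dropLast[i]? = some x) :
    l[i]? = some x := by
  rw [List.dropLast_eq_take, List.getElem?_take] at h
  split at h
  · exact h
  · exact absurd h (by simp)

lemma getElem?_of_take {l : List α} {n i : ℕ} {x : α} (h : (l.take n)[i]? = some x) :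
    i < n ∧ l[i]? = some x := by
  rw [List.getElem?_take] at h
  split at h
  · exact ⟨‹_›, h⟩
  · exact absurd h (by simp)

lemma concat_of_getLast? {l : List α} {x : α} (h : l.getLast? = some x) :
    l = l.dropLast ++ [x] := by
  rcases List.eq_nil_or_concat l with rfl | ⟨l', y, rfl⟩
  · simp at h
  · simp only [List.concat_eq_append] at h ⊢
    rw [List.getLast?_concat] at h
    obtain rfl : y = x := by simpa using h
    rw [List.dropLast_concat]

lemma mem_of_getLast?' {l : List α} {x : α} (h : l.getLast? = some x) : x ∈ l := by
  rw [concat_of_getLast? h]; simp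

lemma prefix_dropLast {ws w : List α} (h : ws <+: w) (hl : ws.length < w.length) :
    ws <+: w.dropLast := by
  obtain ⟨r, rfl⟩ := h
  have hr : r ≠ [] := by rintro rfl; simp at hl
  rw [List.dropLast_append_of_ne_nil hr]
  exact List.prefix_append _ _

lemma getElem?_concat_cases {l : List α} {x y : α} {i : ℕ} (h : (l ++ [x])[i]? = some y) :
    l[i]? = some y ∨ (i = l.length ∧ y = x) := by
  rcases lt_trichotomy i l.length with hi | hi | hi
  · rw [List.getElem?_append_left hi] at h; exact Or.inl h
  · subst hi; rw [List.getElem?_concat_length] at h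
    exact Or.inr ⟨rfl, (Option.some.injEq ..).mp h.symm⟩
  · rw [List.getElem?_eq_none (by simp; omega)] at h; cases h
end ListAux

section StackAux
variable {A : Type} [DecidableEq A]

lemma clone2_eq_some {s t : Stack2 A} (h : clone2 s = some t) :
    ∃ w, s.getLast? = some w ∧ t = s ++ [w] := by
  unfold clone2 top2 at h
  cases hL : s.getLast? with
  | none => rw [hL] at h; cases h
  | some w => rw [hL] at h; exact ⟨w, rfl, by simpa using h.symm⟩

lemma push1_eq_some {bot a : A} {s t : Stack2 A} (h : push1 bot a s = some t) :
    ∃ w, s.getLast? = some w ∧ t = s.dropLast ++ [w ++ [Sum.inl a]] := by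
  unfold push1 top2 at h
  split at h
  · cases h
  · cases hL : s.getLast? with
    | none => rw [hL] at h; cases h
    | some w => rw [hL] at h; exact ⟨w, rfl, by simpa using h.symm⟩

lemma push2_eq_some {bot a : A} {s t : Stack2 A} (h : push2 bot a s = some t) :
    ∃ w, s.getLast? = some w ∧ t = s.dropLast ++ [w ++ [Sum.inr (a, s.length - 1)]] := by
  unfold push2 top2 at h
  split at h
  · cases h
  · cases hL : s.getLast? with
    | none => rw [hL] at h; cases h
    | some w => rw [hL] at h; exact ⟨w, rfl, by simpa using h.symm⟩

lemma pop1_eq_some {s t : Stack2 A} (h : pop1 s = some t) :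
    ∃ w, s.getLast? = some w ∧ 1 < w.length ∧ t = s.dropLast ++ [w.dropLast] := by
  unfold pop1 at h
  cases hL : s.getLast? with
  | none => rw [hL] at h; cases h
  | some w =>
    rw [hL] at h
    change (if 1 < w.length then some (s.dropLast ++ [w.dropLast]) else none) = some t at h
    split at h
    · exact ⟨w, rfl, ‹_›, (Option.some.injEq ..).mp h.symm⟩
    · cases h

lemma pop2_eq_some {s t : Stack2 A} (h : pop2 s = some t) :
    1 < s.length ∧ t = s.dropLast := by
  unfold pop2 at h
  split at h
  · exact ⟨‹_›, (Option.some.injEq ..).mp h.symm⟩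
  · cases h

lemma pop1_some_iff {s : Stack2 A} {w : Word A} (hL : s.getLast? = some w) (hw : 1 < w.length) :
    pop1 s = some (s.dropLast ++ [w.dropLast]) := by
  unfold pop1; rw [hL]; simp [hw]

lemma pop1_length {s t : Stack2 A} (h : pop1 s = some t) : t.length = s.length := by
  obtain ⟨w, hL, _, rfl⟩ := pop1_eq_some h
  have : s ≠ [] := by rintro rfl; simp at hL
  simp [List.length_dropLast]
  have : 1 ≤ s.length := List.length_pos_iff.mpr this
  omega

lemma collapse_cases {s t : Stack2 A} (h : collapse s = some t) :
    (pop1 s = some t) ∨ ∃ a k, top1 s = some (Sum.inr (a, k)) ∧ 0 < k ∧ t = s.take k := by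
  unfold collapse at h
  cases hT : top1 s with
  | none => rw [hT] at h; cases h
  | some ℓ =>
    rw [hT] at h
    cases ℓ with
    | inl x => exact Or.inl h
    | inr p =>
      obtain ⟨a, k⟩ := p
      change (if 0 < k then some (s.take k) else none) = some t at h
      split at h
      · exact Or.inr ⟨a, k, rfl, ‹_›, (Option.some.injEq ..).mp h.symm⟩
      · cases h

lemma iter_pop1_length {n : ℕ} : ∀ {s t : Stack2 A}, iter pop1 n s = some t → t.length = s.length := by
  induction n with
  | zero => intro s t h; cases h; rfl
  | succ n ih =>
    intro s t h
    unfold iter at h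
    cases hp : pop1 s with
    | none => rw [hp] at h; cases h
    | some u => rw [hp] at h; rw [ih h, pop1_length hp]

lemma iter_pop2_length {n : ℕ} : ∀ {s t : Stack2 A}, iter pop2 n s = some t → t.length ≤ s.length := by
  induction n with
  | zero => intro s t h; cases h; exact le_refl _
  | succ n ih =>
    intro s t h
    unfold iter at h
    cases hp : pop2 s with
    | none => rw [hp] at h; cases h
    | some u =>
      rw [hp] at h
      obtain ⟨h1, rfl⟩ := pop2_eq_some hp
      calc t.length ≤ _ := ih h
        _ ≤ s.length := by simp [List.length_dropLast]

lemma substack_length {t s : Stack2 A} (h : Substack t s) : t.length ≤ s.length := by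
  obtain ⟨n, m, h⟩ := h
  cases hp : iter pop2 m s with
  | none => rw [hp] at h; cases h
  | some u => rw [hp] at h; rw [iter_pop1_length h]; exact iter_pop2_length hp

end StackAux
section Invariant
variable {A : Type} [DecidableEq A]

/-- Letters of a word are either low links (`< T`), high links (`≥ B+1`), or the
critical link `B` sitting above a copy of `ws`. -/
def GoodW {A : Type} (B : ℕ) (ws : Word A) (T : ℕ) (w : Word A) : Prop :=
  ∀ p a k, w[p]? = some (Sum.inr (a, k)) → k < T ∨ B + 1 ≤ k ∨ (k = B ∧ ws <+: w.take p)

lemma goodW_concat {B T : ℕ} {ws w : Word A} (h : GoodW B ws T w)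
    (ℓ : Letter A) (hℓ : ∀ a k, ℓ = Sum.inr (a, k) → k < T ∨ B + 1 ≤ k ∨ (k = B ∧ ws <+: w)) :
    GoodW B ws T (w ++ [ℓ]) := by
  intro p a k hp
  rcases getElem?_concat_cases hp with hp' | ⟨rfl, hx⟩
  · have hpw : p < w.length := (List.getElem?_eq_some_iff.mp hp').1
    have htk : (w ++ [ℓ]).take p = w.take p := by
      rw [List.take_append, show p - w.length = 0 by omega]
      simp
    rcases h _ _ _ hp' with h1 | h2 | ⟨h3, h4⟩
    · exact Or.inl h1
    · exact Or.inr (Or.inl h2)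
    · exact Or.inr (Or.inr ⟨h3, htk ▸ h4⟩)
  · rcases hℓ a k hx.symm with h1 | h2 | ⟨h3, h4⟩
    · exact Or.inl h1
    · exact Or.inr (Or.inl h2)
    · exact Or.inr (Or.inr ⟨h3, by rw [List.take_left]; exact h4⟩)

lemma goodW_take {B T n : ℕ} {ws w : Word A} (h : GoodW B ws T w) :
    GoodW B ws T (w.take n) := by
  intro p a k hp
  obtain ⟨hpn, hp'⟩ := getElem?_of_take hp
  rcases h _ _ _ hp' with h1 | h2 | ⟨h3, h4⟩
  · exact Or.inl h1
  · exact Or.inr (Or.inl h2)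
  · refine Or.inr (Or.inr ⟨h3, ?_⟩)
    rw [List.take_take, min_eq_left (le_of_lt hpn)]
    exact h4

lemma goodW_dropLast {B T : ℕ} {ws w : Word A} (h : GoodW B ws T w) :
    GoodW B ws T w.dropLast := by
  rw [List.dropLast_eq_take]; exact goodW_take h

/-- The invariant carried along the run in the "no visit to `Pop₁`" case. -/
def InvD {A : Type} (base : Stack2 A) (ws : Word A) (T : ℕ) (u : Stack2 A) : Prop :=
  ∃ w vr, u = base ++ w :: vr ∧ ws <+: w ∧ ∀ x ∈ w :: vr, GoodW base.length ws T x

lemma inv_pop1 {base : Stack2 A} {ws w : Word A} {T : ℕ} {vr : List (Word A)} {u' : Stack2 A}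
    (happ : pop1 (base ++ w :: vr) = some u')
    (hpre : ws <+: w)
    (hgood : ∀ x ∈ w :: vr, GoodW base.length ws T x) :
    InvD base ws T u' ∨ (u' = base ++ [ws.dropLast] ∧ 1 < ws.length) := by
  obtain ⟨L, hL, hlen, rfl⟩ := pop1_eq_some happ
  rw [List.getLast?_append_of_ne_nil _ (List.cons_ne_nil _ _)] at hL
  rcases List.eq_nil_or_concat vr with rfl | ⟨vr', L0, rfl⟩
  · have hw : L = w := by simpa using hL.symm
    subst hw
    have hdl : (base ++ [L]).dropLast ++ [L.dropLast] = base ++ [L.dropLast] := by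
      rw [List.dropLast_concat]
    rw [hdl]
    by_cases heq : ws.length = L.length
    · have : ws = L := hpre.eq_of_length heq
      subst this
      exact Or.inr ⟨rfl, hlen⟩
    · left
      refine ⟨L.dropLast, [], rfl, prefix_dropLast hpre (lt_of_le_of_ne hpre.length_le heq), ?_⟩
      intro x hx
      rcases List.mem_cons.mp hx with rfl | hx
      · exact goodW_dropLast (hgood L List.mem_cons_self)
      · simp at hx
  · simp only [List.concat_eq_append] at hL ⊢
    have hw : L = L0 := by
      rw [show w :: (vr' ++ [L0]) = (w :: vr') ++ [L0] by simp, List.getLast?_concat] at hL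
      simpa using hL.symm
    subst hw
    have hdl : (base ++ w :: (vr' ++ [L])).dropLast = base ++ w :: vr' := by
      rw [show base ++ w :: (vr' ++ [L]) = (base ++ w :: vr') ++ [L] by simp,
        List.dropLast_concat]
    rw [hdl]
    left
    refine ⟨w, vr' ++ [L.dropLast], by simp, hpre, ?_⟩
    intro x hx
    rcases List.mem_cons.mp hx with rfl | hx
    · exact hgood x List.mem_cons_self
    rcases List.mem_append.mp hx with hx | hx
    · exact hgood x (by simp [hx])
    · have : x = L.dropLast := by simpa using hx
      subst this
      exact goodW_dropLast (hgood L (by simp))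

lemma inv_step {bot : A} {base : Stack2 A} {ws w : Word A} {T : ℕ} {vr : List (Word A)}
    {op : Op A} {u' : Stack2 A}
    (happ : applyOp bot op (base ++ w :: vr) = some u')
    (hlen' : base.length + 1 ≤ u'.length)
    (hpre : ws <+: w)
    (hgood : ∀ x ∈ w :: vr, GoodW base.length ws T x) :
    InvD base ws T u' ∨ (u' = base ++ [ws.dropLast] ∧ 1 < ws.length) := by
  cases op with
  | clone2 =>
    obtain ⟨L, hL, rfl⟩ := clone2_eq_some happ
    rw [List.getLast?_append_of_ne_nil _ (List.cons_ne_nil _ _)] at hL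
    have hLmem : L ∈ w :: vr := mem_of_getLast?' hL
    left
    refine ⟨w, vr ++ [L], by simp, hpre, ?_⟩
    intro x hx
    rcases List.mem_cons.mp hx with rfl | hx
    · exact hgood x List.mem_cons_self
    rcases List.mem_append.mp hx with hx | hx
    · exact hgood x (by simp [hx])
    · have : x = L := by simpa using hx
      subst this; exact hgood _ hLmem
  | pop1 => exact inv_pop1 happ hpre hgood
  | pop2 =>
    obtain ⟨hl, rfl⟩ := pop2_eq_some happ
    rcases List.eq_nil_or_concat vr with rfl | ⟨vr', L0, rfl⟩
    · exfalso
      rw [List.dropLast_concat] at hlen'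
      omega
    · simp only [List.concat_eq_append]
      rw [show base ++ w :: (vr' ++ [L0]) = (base ++ w :: vr') ++ [L0] by simp,
        List.dropLast_concat]
      left
      refine ⟨w, vr', rfl, hpre, ?_⟩
      intro x hx
      rcases List.mem_cons.mp hx with rfl | hx
      · exact hgood x List.mem_cons_self
      · exact hgood x (by simp [hx])
  | collapse =>
    rcases collapse_cases happ with hp | ⟨a, k, htop, hk, rfl⟩
    · exact inv_pop1 hp hpre hgood
    · have hlk : (base ++ w :: vr).length = base.length + vr.length + 1 := by
        simp
        omega
      have hkB : base.length + 1 ≤ k := by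
        rw [List.length_take, hlk] at hlen'
        omega
      have htk : (base ++ w :: vr).take k = base ++ w :: vr.take (k - base.length - 1) := by
        obtain ⟨d, hd⟩ : ∃ d, k = base.length + 1 + d := ⟨k - base.length - 1, by omega⟩
        subst hd
        have e1 : base.length + 1 + d - base.length = d + 1 := by omega
        have e2 : base.length + 1 + d - base.length - 1 = d := by omega
        rw [List.take_append,
          List.take_of_length_le (by omega : base.length ≤ base.length + 1 + d),
          e1, List.take_succ_cons]
        simp
      rw [htk]
      left
      refine ⟨w, vr.take (k - base.length - 1), rfl, hpre, ?_⟩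
      intro x hx
      rcases List.mem_cons.mp hx with rfl | hx
      · exact hgood x List.mem_cons_self
      · exact hgood x (by simp [List.mem_of_mem_take hx])
  | push1 a =>
    obtain ⟨L, hL, rfl⟩ := push1_eq_some happ
    rw [List.getLast?_append_of_ne_nil _ (List.cons_ne_nil _ _)] at hL
    rcases List.eq_nil_or_concat vr with rfl | ⟨vr', L0, rfl⟩
    · have hw : L = w := by simpa using hL.symm
      subst hw
      rw [List.dropLast_concat]
      left
      refine ⟨L ++ [Sum.inl a], [], rfl, hpre.trans (List.prefix_append _ _), ?_⟩
      intro x hx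
      have : x = L ++ [Sum.inl a] := by simpa using hx
      subst this
      exact goodW_concat (hgood L (by simp)) _ (by simp)
    · simp only [List.concat_eq_append] at hL ⊢
      have hw : L = L0 := by
        rw [show w :: (vr' ++ [L0]) = (w :: vr') ++ [L0] by simp, List.getLast?_concat] at hL
        simpa using hL.symm
      subst hw
      rw [show base ++ w :: (vr' ++ [L]) = (base ++ w :: vr') ++ [L] by simp,
        List.dropLast_concat]
      left
      refine ⟨w, vr' ++ [L ++ [Sum.inl a]], by simp, hpre, ?_⟩
      intro x hx
      rcases List.mem_cons.mp hx with rfl | hx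
      · exact hgood x List.mem_cons_self
      rcases List.mem_append.mp hx with hx | hx
      · exact hgood x (by simp [hx])
      · have : x = L ++ [Sum.inl a] := by simpa using hx
        subst this
        exact goodW_concat (hgood L (by simp)) _ (by simp)
  | push2 a =>
    obtain ⟨L, hL, rfl⟩ := push2_eq_some happ
    rw [List.getLast?_append_of_ne_nil _ (List.cons_ne_nil _ _)] at hL
    rcases List.eq_nil_or_concat vr with rfl | ⟨vr', L0, rfl⟩
    · have hw : L = w := by simpa using hL.symm
      subst hw
      have hlk : (base ++ [L]).length - 1 = base.length := by simp
      rw [List.dropLast_concat, hlk]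
      left
      refine ⟨L ++ [Sum.inr (a, base.length)], [], rfl,
        hpre.trans (List.prefix_append _ _), ?_⟩
      intro x hx
      have : x = L ++ [Sum.inr (a, base.length)] := by simpa using hx
      subst this
      refine goodW_concat (hgood L (by simp)) _ ?_
      intro a' k' hk'
      simp only [Sum.inr.injEq, Prod.mk.injEq] at hk'
      exact Or.inr (Or.inr ⟨hk'.2.symm, hpre⟩)
    · simp only [List.concat_eq_append] at hL ⊢
      have hw : L = L0 := by
        rw [show w :: (vr' ++ [L0]) = (w :: vr') ++ [L0] by simp, List.getLast?_concat] at hL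
        simpa using hL.symm
      subst hw
      have hlk : (base ++ w :: (vr' ++ [L])).length - 1 = base.length + vr'.length + 1 := by
        simp; omega
      rw [show base ++ w :: (vr' ++ [L]) = (base ++ w :: vr') ++ [L] by simp] at hlk ⊢
      rw [List.dropLast_concat, hlk]
      left
      refine ⟨w, vr' ++ [L ++ [Sum.inr (a, base.length + vr'.length + 1)]], by simp, hpre, ?_⟩
      intro x hx
      rcases List.mem_cons.mp hx with rfl | hx
      · exact hgood x List.mem_cons_self
      rcases List.mem_append.mp hx with hx | hx
      · exact hgood x (by simp [hx])
      · have : x = L ++ [Sum.inr (a, base.length + vr'.length + 1)] := by simpa using hx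
        subst this
        refine goodW_concat (hgood L (by simp)) _ ?_
        intro a' k' hk'
        simp only [Sum.inr.injEq, Prod.mk.injEq] at hk'
        exact Or.inr (Or.inl (by omega))

end Invariant
section Links
variable {A : Type} [DecidableEq A]

lemma links_pop1 {s t : Stack2 A} (h : pop1 s = some t)
    (ih : ∀ (i : ℕ) (w : Word A), s[i]? = some w → ∀ (p : ℕ) (a : A) (k : ℕ), w[p]? = some (Sum.inr (a, k)) → k ≤ i) :
    ∀ (i : ℕ) (w : Word A), t[i]? = some w → ∀ (p : ℕ) (a : A) (k : ℕ), w[p]? = some (Sum.inr (a, k)) → k ≤ i := by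
  obtain ⟨L, hL, hlen, rfl⟩ := pop1_eq_some h
  intro i w hw p a k hp
  rcases getElem?_concat_cases hw with hw' | ⟨rfl, rfl⟩
  · exact ih i w (getElem?_of_dropLast hw') p a k hp
  · have hs : s ≠ [] := by rintro rfl; simp at hL
    have hs1 : 1 ≤ s.length := List.length_pos_iff.mpr hs
    have hL' : s[s.length - 1]? = some L := by
      rw [← List.getLast?_eq_getElem?]; exact hL
    have := ih _ L hL' p a k (getElem?_of_dropLast hp)
    rw [List.length_dropLast]
    omega

lemma isStack_links {bot : A} {u : Stack2 A} (h : IsStack bot u) :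
    ∀ (i : ℕ) (w : Word A), u[i]? = some w → ∀ (p : ℕ) (a : A) (k : ℕ), w[p]? = some (Sum.inr (a, k)) → k ≤ i := by
  induction h with
  | base =>
    intro i w hw p a k hp
    have hi : i < 1 := by
      have := (List.getElem?_eq_some_iff.mp hw).1
      simpa [bottom2] using this
    obtain rfl : i = 0 := by omega
    obtain rfl : [Sum.inl bot] = w := by simpa [bottom2] using hw
    have hp1 : p < 1 := by
      have := (List.getElem?_eq_some_iff.mp hp).1
      simpa using this
    obtain rfl : p = 0 := by omega
    simp at hp
  | @step s t op hs happ ih =>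
    cases op with
    | clone2 =>
      obtain ⟨L, hL, rfl⟩ := clone2_eq_some happ
      intro i w hw p a k hp
      rcases getElem?_concat_cases hw with hw' | ⟨rfl, rfl⟩
      · exact ih i w hw' p a k hp
      · have hs' := hL
        rw [List.getLast?_eq_getElem?] at hs'
        have := ih _ _ hs' p a k hp
        omega
    | pop1 => exact links_pop1 happ ih
    | pop2 =>
      obtain ⟨hl, rfl⟩ := pop2_eq_some happ
      intro i w hw p a k hp
      exact ih i w (getElem?_of_dropLast hw) p a k hp
    | collapse =>
      rcases collapse_cases happ with hp' | ⟨a0, k0, htop, hk0, rfl⟩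
      · exact links_pop1 hp' ih
      · intro i w hw p a k hp
        obtain ⟨hik, hw'⟩ := getElem?_of_take hw
        exact ih i w hw' p a k hp
    | push1 a0 =>
      obtain ⟨L, hL, rfl⟩ := push1_eq_some happ
      intro i w hw p a k hp
      rcases getElem?_concat_cases hw with hw' | ⟨rfl, rfl⟩
      · exact ih i w (getElem?_of_dropLast hw') p a k hp
      · have hsne : s ≠ [] := by rintro rfl; simp at hL
        have hs1 : 1 ≤ s.length := List.length_pos_iff.mpr hsne
        rcases getElem?_concat_cases hp with hp' | ⟨rfl, hx⟩
        · have hs' : s[s.length - 1]? = some L := by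
            rw [← List.getLast?_eq_getElem?]; exact hL
          have := ih _ _ hs' p a k hp'
          rw [List.length_dropLast]
          omega
        · cases hx
    | push2 a0 =>
      obtain ⟨L, hL, rfl⟩ := push2_eq_some happ
      intro i w hw p a k hp
      rcases getElem?_concat_cases hw with hw' | ⟨rfl, rfl⟩
      · exact ih i w (getElem?_of_dropLast hw') p a k hp
      · have hsne : s ≠ [] := by rintro rfl; simp at hL
        have hs1 : 1 ≤ s.length := List.length_pos_iff.mpr hsne
        rcases getElem?_concat_cases hp with hp' | ⟨rfl, hx⟩
        · have hs' : s[s.length - 1]? = some L := by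
            rw [← List.getLast?_eq_getElem?]; exact hL
          have := ih _ _ hs' p a k hp'
          rw [List.length_dropLast]
          omega
        · have hk : k = s.length - 1 := by
            have := hx.symm
            simp only [Sum.inr.injEq, Prod.mk.injEq] at this
            exact this.2.symm
          rw [List.length_dropLast]
          omega

lemma isStack_ne_nil {bot : A} {u : Stack2 A} (h : IsStack bot u) : u ≠ [] := by
  induction h with
  | base => simp [bottom2]
  | @step s t op hs happ ih =>
    cases op with
    | clone2 => obtain ⟨L, hL, rfl⟩ := clone2_eq_some happ; simp
    | pop1 => obtain ⟨w, hL, hw, rfl⟩ := pop1_eq_some happ; simp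
    | pop2 =>
      obtain ⟨hl, rfl⟩ := pop2_eq_some happ
      apply List.ne_nil_of_length_pos
      rw [List.length_dropLast]
      omega
    | collapse =>
      rcases collapse_cases happ with hp | ⟨a, k, htop, hk, rfl⟩
      · obtain ⟨w, hL, hw, rfl⟩ := pop1_eq_some hp; simp
      · apply List.ne_nil_of_length_pos
        rw [List.length_take]
        have : 0 < s.length := List.length_pos_iff.mpr ih
        omega
    | push1 a0 => obtain ⟨L, hL, rfl⟩ := push1_eq_some happ; simp
    | push2 a0 => obtain ⟨L, hL, rfl⟩ := push2_eq_some happ; simp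

end Links

section MainLemma
variable {Q A Γ : Type} [DecidableEq A] {S : CPS Q A Γ}

lemma run_step (ρ : Run S) {m : ℕ} (hm : m < ρ.len) :
    applyOp S.bot (ρ.op m) (ρ.stk m) = some (ρ.stk (m + 1)) := by
  obtain ⟨σ, -, -, h⟩ := ρ.ok m hm
  exact h

lemma retSeg_shell {ρ : Run S} {i j : ℕ} (h : RetSeg ρ i j) : RetShell ρ i j := by
  cases h with
  | pop2 h _ => exact h
  | collapse h _ _ => exact h
  | sub h _ _ _ _ => exact h

lemma shell_of (ρ : Run S) {i j : ℕ}
    (hij : i < j) (hj : j ≤ ρ.len) (hpop : pop2 (ρ.stk i) = some (ρ.stk j))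
    (hw : ∀ m, i ≤ m → m < j → (ρ.stk j).length < (ρ.stk m).length) :
    RetShell ρ i j :=
  ⟨hij, hj, hpop, fun m hm hmj hsub =>
    absurd (substack_length hsub) (not_le.mpr (hw m hm hmj))⟩

lemma main_return (ρ : Run S) (T : ℕ) (hT1 : 1 ≤ T) :
    ∀ n i j (base : Stack2 A) (ws : Word A),
      i ≤ j → j - i ≤ n → j ≤ ρ.len →
      ρ.stk i = base ++ [ws] →
      (∀ (p : ℕ) (a : A) (k : ℕ), ws[p]? = some (Sum.inr (a, k)) → k < T) →
      T ≤ base.length →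
      (∀ m, i ≤ m → m < j → base.length + 1 ≤ (ρ.stk m).length) →
      T ≤ (ρ.stk j).length → (ρ.stk j).length ≤ base.length →
      RetSeg ρ i j := by
  intro n
  induction n with
  | zero =>
    intro i j base ws hij hn hj h0 hlink hTB h1 h2a h2b
    exfalso
    obtain rfl : j = i := by omega
    rw [h0] at h2b
    simp only [List.length_append, List.length_cons, List.length_nil] at h2b
    omega
  | succ n ih =>
    intro i j base ws hij hn hj h0 hlink hTB h1 h2a h2b
    have hBpos : 1 ≤ base.length := le_trans hT1 hTB
    have hij' : i < j := by
      rcases lt_or_eq_of_le hij with h | rfl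
      · exact h
      · exfalso
        rw [h0] at h2b
        simp only [List.length_append, List.length_cons, List.length_nil] at h2b
        omega
    have hpop2s : pop2 (ρ.stk i) = some base := by
      rw [h0]
      unfold pop2
      rw [if_pos (by simp; omega)]
      rw [List.dropLast_concat]
    by_cases hvis : ∃ k, i < k ∧ k ≤ j ∧ ρ.stk k = base ++ [ws.dropLast] ∧ 1 < ws.length
    · obtain ⟨k, hik, hkj, hsk, hws2⟩ := hvis
      have hret : RetSeg ρ k j := by
        apply ih k j base ws.dropLast hkj (by omega) hj hsk ?_ hTB
          (fun m hm hmj => h1 m (by omega) hmj) h2a h2b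
        intro p a k' hp
        exact hlink p a k' (getElem?_of_dropLast hp)
      have hstkj : ρ.stk j = base := by
        have hshell := retSeg_shell hret
        have h5 := hshell.2.2.1
        rw [hsk] at h5
        unfold pop2 at h5
        rw [if_pos (by simp; omega)] at h5
        rw [List.dropLast_concat] at h5
        exact (Option.some_inj.mp h5).symm
      refine RetSeg.sub (shell_of ρ hij' hj (by rw [hstkj]; exact hpop2s) ?_) hik hkj ?_ hret
      · intro m hm hmj
        rw [hstkj]
        have := h1 m hm hmj
        omega
      · rw [h0, hsk]
        have h6 := pop1_some_iff (s := base ++ [ws]) List.getLast?_concat hws2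
        rwa [List.dropLast_concat] at h6
    · -- no visit of Pop₁ of the initial stack
      have key : ∀ m, i ≤ m → m < j → InvD base ws T (ρ.stk m) := by
        intro m hm
        induction m, hm using Nat.le_induction with
        | base =>
          intro _
          refine ⟨ws, [], h0, List.prefix_refl _, ?_⟩
          intro x hx
          obtain rfl : x = ws := by simpa using hx
          intro p a k hp
          exact Or.inl (hlink p a k hp)
        | succ m hm ihm =>
          intro hmj
          have hmj' : m < j := by omega
          obtain ⟨w, vr, he, hpre, hgood⟩ := ihm hmj'
          have happ : applyOp S.bot (ρ.op m) (ρ.stk m) = some (ρ.stk (m + 1)) :=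
            run_step ρ (by omega)
          rw [he] at happ
          rcases inv_step happ (h1 (m + 1) (by omega) hmj) hpre hgood with hInv | ⟨heq, hws2⟩
          · exact hInv
          · exact absurd ⟨m + 1, by omega, by omega, heq, hws2⟩ hvis
      obtain ⟨w, vr, he, hpre, hgood⟩ := key (j - 1) (by omega) (by omega)
      have hlt : j - 1 < ρ.len := by omega
      have happ : applyOp S.bot (ρ.op (j - 1)) (ρ.stk (j - 1)) = some (ρ.stk j) := by
        have h7 := run_step ρ hlt
        rwa [show j - 1 + 1 = j by omega] at h7
      have hlenj1 : (ρ.stk (j - 1)).length = base.length + vr.length + 1 := by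
        rw [he]
        simp only [List.length_append, List.length_cons]
        omega
      cases hop : ρ.op (j - 1) with
      | clone2 =>
        exfalso
        rw [hop] at happ
        obtain ⟨L, hL, hLeq⟩ := clone2_eq_some happ
        have h8 : (ρ.stk j).length = (ρ.stk (j - 1)).length + 1 := by rw [hLeq]; simp
        omega
      | pop1 =>
        exfalso
        rw [hop] at happ
        have := pop1_length happ
        omega
      | push1 a0 =>
        exfalso
        rw [hop] at happ
        obtain ⟨L, hL, hLeq⟩ := push1_eq_some happ
        have h8 : (ρ.stk j).length = (ρ.stk (j - 1)).length - 1 + 1 := by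
          rw [hLeq]; simp
        omega
      | push2 a0 =>
        exfalso
        rw [hop] at happ
        obtain ⟨L, hL, hLeq⟩ := push2_eq_some happ
        have h8 : (ρ.stk j).length = (ρ.stk (j - 1)).length - 1 + 1 := by
          rw [hLeq]; simp
        omega
      | pop2 =>
        rw [hop] at happ
        obtain ⟨hgt, hdl⟩ := pop2_eq_some happ
        have hlj : (ρ.stk j).length = base.length + vr.length := by
          rw [hdl, List.length_dropLast, hlenj1]
          omega
        have hvr : vr = [] := List.length_eq_zero_iff.mp (by omega)
        subst hvr
        have hstkj : ρ.stk j = base := by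
          rw [hdl, he, List.dropLast_concat]
        refine RetSeg.pop2 (shell_of ρ hij' hj (by rw [hstkj]; exact hpop2s) ?_) hop
        intro m hm hmj
        rw [hstkj]
        have := h1 m hm hmj
        omega
      | collapse =>
        rw [hop] at happ
        rcases collapse_cases happ with hp | ⟨a0, k0, htop, hk0, htake⟩
        · exfalso
          have := pop1_length hp
          omega
        · have hlenj : (ρ.stk j).length = min k0 (ρ.stk (j - 1)).length := by
            rw [htake]; simp
          have hminle : min k0 (ρ.stk (j - 1)).length ≤ base.length := by
            rw [← hlenj]; exact h2b
          have hk0B : k0 ≤ base.length := by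
            by_contra hc
            push_neg at hc
            have := le_min hc (by omega : base.length + 1 ≤ (ρ.stk (j - 1)).length)
            omega
          have hT2 : T ≤ k0 := by
            have h9 : (ρ.stk j).length = k0 := by
              rw [hlenj, min_eq_left (by omega)]
            omega
          rw [he] at htop
          unfold top1 at htop
          rw [List.getLast?_append_of_ne_nil _ (List.cons_ne_nil _ _)] at htop
          have hne : w :: vr ≠ [] := List.cons_ne_nil _ _
          have hL : (w :: vr).getLast? = some ((w :: vr).getLast hne) :=
            List.getLast?_eq_getLast hne
          generalize hLdef : (w :: vr).getLast hne = L at hL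
          rw [hL, Option.bind_some] at htop
          have hLmem : L ∈ w :: vr := hLdef ▸ List.getLast_mem hne
          have hLne : L ≠ [] := by rintro rfl; simp at htop
          have hL1 : 1 ≤ L.length := List.length_pos_iff.mpr hLne
          have hLget : L[L.length - 1]? = some (Sum.inr (a0, k0)) := by
            rw [← List.getLast?_eq_getElem?]; exact htop
          rcases hgood L hLmem _ _ _ hLget with h1' | h2' | ⟨h3', h4'⟩
          · omega
          · omega
          have hwsL : ws <+: L := h4'.trans (List.take_prefix _ _)
          have hwsne : ws ≠ L := by
            intro hac
            have h5 := h4'.length_le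
            rw [List.length_take, hac] at h5
            have h7 : min (L.length - 1) L.length = L.length - 1 :=
              min_eq_left (by omega)
            rw [h7] at h5
            omega
          have hstkj : ρ.stk j = base := by
            rw [htake, he, h3']
            exact List.take_left
          refine RetSeg.collapse (shell_of ρ hij' hj (by rw [hstkj]; exact hpop2s) ?_) hop
            ⟨ws, L, ?_, ?_, hwsL, hwsne⟩
          · intro m hm hmj
            rw [hstkj]
            have := h1 m hm hmj
            omega
          · rw [h0]
            exact List.getLast?_concat
          · rw [he]
            unfold top2
            rw [List.getLast?_append_of_ne_nil _ hne]
            exact hL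

end MainLemma
/-- If `|t| < |s|`, `TOP₂(s)` is a word-prefix of `TOP₂(t)` and `ρ`
is a run starting at `s` whose stacks have width `≥ |s|` except the final one, whose
width lies in `[|t|, |s|)`, then `ρ` is a return. -/
theorem return_of_cloned_words
    {Q A Γ : Type} [DecidableEq A] (S : CPS Q A Γ)
    (s t : Stack2 A) (hs : IsStack S.bot s) (ht : IsStack S.bot t)
    (hlen : t.length < s.length)
    (htop : ∃ ws wt, top2 s = some ws ∧ top2 t = some wt ∧ ws <+: wt)
    (ρ : Run S) (h0 : ρ.stk 0 = s)
    (h1 : ∀ i, i < ρ.len → s.length ≤ (ρ.stk i).length)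
    (h2a : t.length ≤ (ρ.stk ρ.len).length)
    (h2b : (ρ.stk ρ.len).length < s.length) :
    RetSeg ρ 0 ρ.len := by
  obtain ⟨ws, wt, hws, hwt, hpre⟩ := htop
  have hsne : s ≠ [] := by
    unfold top2 at hws
    rintro rfl
    simp at hws
  have hs1 : 0 < s.length := List.length_pos_iff.mpr hsne
  have hsdec : s = s.dropLast ++ [ws] := concat_of_getLast? hws
  have htne : t ≠ [] := isStack_ne_nil ht
  have hT1 : 1 ≤ t.length := List.length_pos_iff.mpr htne
  have hwt' : t[t.length - 1]? = some wt := by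
    rw [← List.getLast?_eq_getElem?]; exact hwt
  have hlink : ∀ (p : ℕ) (a : A) (k : ℕ), ws[p]? = some (Sum.inr (a, k)) → k < t.length := by
    intro p a k hp
    obtain ⟨r, hr⟩ := hpre
    have hple : p < ws.length := (List.getElem?_eq_some_iff.mp hp).1
    have hp' : wt[p]? = some (Sum.inr (a, k)) := by
      rw [← hr, List.getElem?_append_left hple]; exact hp
    have := isStack_links ht _ _ hwt' p a k hp'
    omega
  have hslen : s.length = s.dropLast.length + 1 := by
    rw [List.length_dropLast]; omega
  apply main_return ρ t.length hT1 ρ.len 0 ρ.len s.dropLast ws (Nat.zero_le _)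
    (le_refl _) (le_refl _) (by rw [h0]; exact hsdec) hlink (by omega)
    (fun m _ hmj => by have := h1 m hmj; omega) h2a (by omega)

end CPG
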